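/- Let d ≥ 1, C₁ > 0, and let u₀ : ℝ^d → ℝ be a bounded continuous function with u₀ ≥ 0 and u₀(y) ≥ C₁ for all ‖y‖ < 1. Then there exists a constant C > 0 such that for all t ≥ 1 and all x ∈ ℝ^d, ∫_{ℝ^d} K(t, x − y) u₀(y) dy ≥ C t^{−d/2} exp(−‖x‖²/(2t)). (This is the lower bound on I₁(x,t) in the proof of Theorem 2.3.) -/

import Mathlib

open MeasureTheory

/-- The heat kernel on `ℝ^d`: `K(t,x) = (4πt)^{-d/2} exp(-‖x‖²/(4t))`. -/
noncomputable def heatKernel (d : ℕ) (t : ℝ) (x : EuclideanSpace ℝ (Fin d)) : ℝ :=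
  (4 * Real.pi * t) ^ (-(d : ℝ) / 2) * Real.exp (-‖x‖ ^ 2 / (4 * t))

/- The heat kernel at `x - y` with `‖y‖ ≤ √t` is at least `e^{-1/2} (4πt)^{-d/2} e^{-‖x‖²/(2t)}`,
because `‖x - y‖² ≤ 2‖x‖² + 2‖y‖² ≤ 2‖x‖² + 2t`. Integrating against `u₀ ≥ C₁` over the unit
ball (where `‖y‖² < 1 ≤ t`) gives the bound with `C = C₁ e^{-1/2} (4π)^{-d/2} |B₁|`. -/

lemma integrable_exp_neg_mul_sq_norm {V : Type*} [NormedAddCommGroup V] [InnerProductSpace ℝ V]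
    [FiniteDimensional ℝ V] [MeasurableSpace V] [BorelSpace V] {b : ℝ} (hb : 0 < b) :
    Integrable (fun v : V => Real.exp (-b * ‖v‖ ^ 2)) := by
  refine (GaussianFourier.integrable_cexp_neg_mul_sq_norm_add (b := b) (by simpa using hb) 0
    (0 : V)).norm.congr (.of_forall fun v => ?_)
  simp only [Complex.norm_exp, inner_zero_left, Complex.ofReal_zero, mul_zero, add_zero]
  norm_cast

lemma norm_sub_sq_le_two_mul {E : Type*} [SeminormedAddCommGroup E] (x y : E) :
    ‖x - y‖ ^ 2 ≤ 2 * ‖x‖ ^ 2 + 2 * ‖y‖ ^ 2 := by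
  nlinarith [norm_sub_le x y, norm_nonneg (x - y), sq_nonneg (‖x‖ - ‖y‖)]

namespace heatKernel

variable {d : ℕ} {t : ℝ}

lemma nonneg (ht : 0 ≤ t) (x : EuclideanSpace ℝ (Fin d)) : 0 ≤ heatKernel d t x := by
  unfold heatKernel
  positivity

lemma eq_mul_rpow (ht : 0 ≤ t) (x : EuclideanSpace ℝ (Fin d)) :
    heatKernel d t x
      = (4 * Real.pi) ^ (-(d : ℝ) / 2) * t ^ (-(d : ℝ) / 2) * Real.exp (-‖x‖ ^ 2 / (4 * t)) := by
  rw [heatKernel, Real.mul_rpow (by positivity) ht]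

lemma integrable (ht : 0 < t) : Integrable (heatKernel d t) := by
  refine ((integrable_exp_neg_mul_sq_norm (b := 1 / (4 * t)) (by positivity)).const_mul
    ((4 * Real.pi * t) ^ (-(d : ℝ) / 2))).congr (.of_forall fun x => ?_)
  rw [heatKernel]
  ring_nf

lemma le_apply_sub_of_sq_norm_le (ht : 0 < t) (x : EuclideanSpace ℝ (Fin d))
    {y : EuclideanSpace ℝ (Fin d)} (hy : ‖y‖ ^ 2 ≤ t) :
    Real.exp (-(1 / 2)) * (4 * Real.pi) ^ (-(d : ℝ) / 2) * t ^ (-(d : ℝ) / 2)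
        * Real.exp (-‖x‖ ^ 2 / (2 * t))
      ≤ heatKernel d t (x - y) := by
  have hexp : -(1 / 2) + -‖x‖ ^ 2 / (2 * t) ≤ -‖x - y‖ ^ 2 / (4 * t) := by
    calc -(1 / 2) + -‖x‖ ^ 2 / (2 * t) = -(2 * ‖x‖ ^ 2 + 2 * t) / (4 * t) := by
          field_simp; ring
      _ ≤ _ := by gcongr; linarith [norm_sub_sq_le_two_mul x y]
  rw [eq_mul_rpow ht.le]
  calc _ = (4 * Real.pi) ^ (-(d : ℝ) / 2) * t ^ (-(d : ℝ) / 2)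
        * Real.exp (-(1 / 2) + -‖x‖ ^ 2 / (2 * t)) := by rw [Real.exp_add]; ring
    _ ≤ _ := by gcongr

end heatKernel

theorem stmt_9_general (d : ℕ) (C₁ : ℝ) (hC₁ : 0 < C₁)
    (u₀ : EuclideanSpace ℝ (Fin d) → ℝ)
    (hcont : Continuous u₀) (hbdd : ∃ M, ∀ x, |u₀ x| ≤ M)
    (hnonneg : ∀ x, 0 ≤ u₀ x) (hlb : ∀ y, ‖y‖ < 1 → C₁ ≤ u₀ y) :
    ∃ C > 0, ∀ t : ℝ, 1 ≤ t → ∀ x : EuclideanSpace ℝ (Fin d),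
      C * t ^ (-(d : ℝ) / 2) * Real.exp (-‖x‖ ^ 2 / (2 * t))
        ≤ ∫ y, heatKernel d t (x - y) * u₀ y := by
  obtain ⟨M, hM⟩ := hbdd
  set B := Metric.ball (0 : EuclideanSpace ℝ (Fin d)) 1
  have hB : 0 < volume.real B := 
    ENNReal.toReal_pos (Metric.measure_ball_pos volume 0 one_pos).ne' measure_ball_lt_top.ne
  refine ⟨C₁ * Real.exp (-(1 / 2)) * (4 * Real.pi) ^ (-(d : ℝ) / 2) * volume.real B,
    by positivity, fun t ht x => ?_⟩
  have ht0 : 0 < t := one_pos.trans_le ht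
  have hint : Integrable fun y => heatKernel d t (x - y) * u₀ y :=
    ((heatKernel.integrable ht0).comp_sub_left x).mul_bdd hcont.aestronglyMeasurable
      (.of_forall hM)
  calc _ = (Real.exp (-(1 / 2)) * (4 * Real.pi) ^ (-(d : ℝ) / 2) * t ^ (-(d : ℝ) / 2)
          * Real.exp (-‖x‖ ^ 2 / (2 * t)) * C₁) * volume.real B := by ring
    _ ≤ ∫ y in B, heatKernel d t (x - y) * u₀ y := by
      refine setIntegral_ge_of_const_le_real measurableSet_ball measure_ball_lt_top.ne
        (fun y hy => ?_) hint.integrableOn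
      rw [mem_ball_zero_iff] at hy
      have hy_sq : ‖y‖ ^ 2 ≤ t := by nlinarith [norm_nonneg y]
      exact mul_le_mul (heatKernel.le_apply_sub_of_sq_norm_le ht0 x hy_sq) (hlb y hy) hC₁.le
        (heatKernel.nonneg ht0.le _)
    _ ≤ ∫ y, heatKernel d t (x - y) * u₀ y :=
      setIntegral_le_integral hint
        (.of_forall fun y => mul_nonneg (heatKernel.nonneg ht0.le _) (hnonneg y))

/-- If `u₀` is bounded continuous, nonnegative, with `u₀ ≥ C₁ > 0` on the unit ball, then
there is `C > 0` with `∫ K(t, x - y) u₀(y) dy ≥ C t^{-d/2} exp(-‖x‖²/(2t))`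
for all `t ≥ 1` and all `x`. -/
theorem stmt_9 (d : ℕ) (hd : 1 ≤ d) (C₁ : ℝ) (hC₁ : 0 < C₁)
    (u₀ : EuclideanSpace ℝ (Fin d) → ℝ)
    (hcont : Continuous u₀) (hbdd : ∃ M, ∀ x, |u₀ x| ≤ M)
    (hnonneg : ∀ x, 0 ≤ u₀ x) (hlb : ∀ y, ‖y‖ < 1 → C₁ ≤ u₀ y) :
    ∃ C > 0, ∀ t : ℝ, 1 ≤ t → ∀ x : EuclideanSpace ℝ (Fin d),
      C * t ^ (-(d : ℝ) / 2) * Real.exp (-‖x‖ ^ 2 / (2 * t))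
        ≤ ∫ y, heatKernel d t (x - y) * u₀ y :=
  stmt_9_general d C₁ hC₁ u₀ hcont hbdd hnonneg hlb
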